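/- arXiv:2508.03938 — 6 statements merged into one kernel-verified Lean document; each statement's English description precedes it below -/
import Mathlib

section
/- For w = 2^c, any axis-parallel rectangle [α,β] × [γ,η] ⊆ [0,w] × [0,w] with integer corners that contains no point of the Van der Corput set C_w = {(q, f_w(q)) : 0 ≤ q ≤ w-1} has area strictly less than 4w. -/
/-- Bit-reversing function. -/
def bitRev (c z : ℕ) : ℕ := ∑ i ∈ Finset.range c, (z / 2 ^ i % 2) * 2 ^ (c - 1 - i)

/-!
If the width of the rectangle is at least `2^j`, its columns meet every residue class modulo
`2^j`. Since the `j` low bits of `q` become the `j` high bits of `f_w(q)`, choosing the residue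
`f_{2^j}(m)` places `f_w(q)` in the dyadic block `[m 2^(c-j), (m+1) 2^(c-j))`. So an empty
rectangle of width in `[2^j, 2^(j+1))` contains no aligned block of length `2^(c-j)`, whence its
height is below `2^(c-j+1)` and its area below `2^(c+2)`.
-/

lemma bitRev_one (z : ℕ) : bitRev 1 z = z % 2 := by simp [bitRev]

lemma div_pow_mod_two_of_lt {i j : ℕ} (h : i < j) (z : ℕ) :
    z % 2 ^ j / 2 ^ i % 2 = z / 2 ^ i % 2 := by
  rw [← pow_sub_mul_pow 2 h.le, Nat.mod_mul_left_div_self]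
  exact Nat.mod_mod_of_dvd _ (dvd_pow_self 2 (Nat.sub_ne_zero_of_lt h))

lemma bitRev_add (j k z : ℕ) :
    bitRev (j + k) z = bitRev j (z % 2 ^ j) * 2 ^ k + bitRev k (z / 2 ^ j) := by
  simp only [bitRev, Finset.sum_range_add, Finset.sum_mul]
  congr 1
  · refine Finset.sum_congr rfl fun i hi => ?_
    rw [Finset.mem_range] at hi
    rw [div_pow_mod_two_of_lt hi, mul_assoc, ← pow_add]
    congr 2
    omega
  · refine Finset.sum_congr rfl fun i hi => ?_
    rw [Finset.mem_range] at hi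
    rw [Nat.div_div_eq_div_mul, ← pow_add]
    congr 2
    omega

lemma bitRev_lt (j z : ℕ) : bitRev j z < 2 ^ j := by
  induction j generalizing z with
  | zero => simp [bitRev]
  | succ j ih =>
    rw [bitRev_add, bitRev_one, pow_succ]
    have := ih (z % 2 ^ j)
    omega

lemma bitRev_bitRev {j z : ℕ} (hz : z < 2 ^ j) : bitRev j (bitRev j z) = z := by
  induction j generalizing z with
  | zero => simp_all [bitRev]
  | succ j ih =>
    have hlt := bitRev_lt j (z / 2)
    have hlow : bitRev (j + 1) z = z % 2 * 2 ^ j + bitRev j (z / 2) := by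
      rw [add_comm, bitRev_add, bitRev_one, pow_one, Nat.mod_mod]
    have hhigh (y : ℕ) : bitRev (j + 1) y = bitRev j (y % 2 ^ j) * 2 + y / 2 ^ j % 2 := by
      rw [bitRev_add, bitRev_one, pow_one]
    rw [hlow, hhigh, Nat.mul_add_mod_self_right, Nat.mod_eq_of_lt hlt, add_comm (z % 2 * 2 ^ j),
      Nat.add_mul_div_right _ _ (by positivity), Nat.div_eq_of_lt hlt,
      ih (by rw [pow_succ] at hz; omega)]
    omega

lemma exists_mul_mem_of_two_mul_le {s γ η : ℕ} (hs : 0 < s) (h : γ + 2 * s ≤ η) :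
    ∃ m, γ ≤ m * s ∧ (m + 1) * s ≤ η := by
  have hdiv : (γ + s - 1) / s * s + (γ + s - 1) % s = γ + s - 1 := Nat.div_add_mod' _ _
  have hmod := Nat.mod_lt (γ + s - 1) hs
  exact ⟨(γ + s - 1) / s, by omega, by rw [add_one_mul]; omega⟩

lemma exists_mod_eq_of_lt {n r : ℕ} (hr : r < n) (α : ℕ) :
    ∃ q, α ≤ q ∧ q < α + n ∧ q % n = r := by
  have := Nat.div_add_mod α n
  have := Nat.mod_lt α (Nat.zero_lt_of_lt hr)
  by_cases hα : α % n ≤ r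
  · exact ⟨n * (α / n) + r, by omega, by omega, by rw [Nat.mul_add_mod, Nat.mod_eq_of_lt hr]⟩
  · exact ⟨n * (α / n) + r + n, by omega, by omega, by
      rw [Nat.add_mod_right, Nat.mul_add_mod, Nat.mod_eq_of_lt hr]⟩

lemma exists_bitRev_mem_block {j k m : ℕ} (hm : m < 2 ^ j) (α : ℕ) :
    ∃ q, α ≤ q ∧ q < α + 2 ^ j ∧
      m * 2 ^ k ≤ bitRev (j + k) q ∧ bitRev (j + k) q < (m + 1) * 2 ^ k := by
  obtain ⟨q, hαq, hqα, hq⟩ := exists_mod_eq_of_lt (bitRev_lt j m) α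
  have hlow := bitRev_lt k (q / 2 ^ j)
  refine ⟨q, hαq, hqα, ?_⟩
  rw [bitRev_add, hq, bitRev_bitRev hm, add_one_mul]
  omega

lemma height_lt_of_vdc_empty {j k α β γ η : ℕ} (hwidth : 2 ^ j ≤ β - α)
    (hβ : β ≤ 2 ^ (j + k)) (hη : η ≤ 2 ^ (j + k))
    (hempty : ∀ q, q < 2 ^ (j + k) →
      ¬(α ≤ q ∧ q < β ∧ γ ≤ bitRev (j + k) q ∧ bitRev (j + k) q < η)) :
    η - γ < 2 * 2 ^ k := by
  by_contra! hheight
  have hγη : γ + 2 * 2 ^ k ≤ η := by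
    have := Nat.two_pow_pos k
    omega
  obtain ⟨m, hγm, hmη⟩ := exists_mul_mem_of_two_mul_le (Nat.two_pow_pos k) hγη
  have hm : m < 2 ^ j := by
    rw [pow_add] at hη
    exact Nat.lt_of_succ_le (Nat.le_of_mul_le_mul_right (hmη.trans hη) (by positivity))
  obtain ⟨q, hαq, hqα, hmq, hqm⟩ := exists_bitRev_mem_block (k := k) hm α
  exact hempty q (by omega) ⟨hαq, by omega, hγm.trans hmq, hqm.trans_le hmη⟩

theorem vdc_empty_rectangle_area_general (c α β γ η : ℕ)
    (hβ : β ≤ 2 ^ c) (hη : η ≤ 2 ^ c)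
    (hempty : ∀ q, q < 2 ^ c →
      ¬(α ≤ q ∧ q < β ∧ γ ≤ bitRev c q ∧ bitRev c q < η)) :
    (β - α) * (η - γ) < 4 * 2 ^ c := by
  rcases Nat.eq_zero_or_pos (β - α) with hw | hw
  · rw [hw, zero_mul]; positivity
  set j := Nat.log 2 (β - α)
  have hwidth : 2 ^ j ≤ β - α := Nat.pow_log_le_self 2 hw.ne'
  have hjc : j ≤ c := (Nat.pow_le_pow_iff_right (by norm_num : 1 < 2)).mp (by omega)
  obtain ⟨k, rfl⟩ := Nat.exists_eq_add_of_le hjc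
  calc (β - α) * (η - γ) ≤ (β - α) * (2 * 2 ^ k) :=
        Nat.mul_le_mul_left _ (height_lt_of_vdc_empty hwidth hβ hη hempty).le
    _ < 2 ^ (j + 1) * (2 * 2 ^ k) :=
        Nat.mul_lt_mul_of_pos_right (Nat.lt_pow_succ_log_self (by norm_num) _) (by positivity)
    _ = 4 * 2 ^ (j + k) := by ring

/-- Any axis-parallel integer rectangle `[α,β] × [γ,η] ⊆ [0,w] × [0,w]` (with `w = 2^c`)
containing no point of the Van der Corput set `C_w = {(q, f_w(q)) : 0 ≤ q ≤ w-1}`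
has area strictly less than `4w`. -/
theorem vdc_empty_rectangle_area (c α β γ η : ℕ) (hc : 0 < c)
    (hβ : β ≤ 2 ^ c) (hη : η ≤ 2 ^ c)
    (hempty : ∀ q, q < 2 ^ c →
      ¬(α ≤ q ∧ q < β ∧ γ ≤ bitRev c q ∧ bitRev c q < η)) :
    (β - α) * (η - γ) < 4 * 2 ^ c :=
  vdc_empty_rectangle_area_general c α β γ η hβ hη hempty
end

section
/- Let w = 2^c and z be an integer multiple of w. Define the tiled set T = ∪_{x,y ∈ {0,...,z/w-1}} {(z1 + xw, z2 + yw) : (z1,z2) ∈ C_w}, where C_w is the Van der Corput set. Then any axis-parallel integer rectangle contained in [0,z]×[0,z] that contains no point of T has area strictly less than 4w. -/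
lemma bitRev_lt_s5 (c n : ℕ) : bitRev c n < 2 ^ c := by
  calc bitRev c n ≤ ∑ i ∈ Finset.range c, 2 ^ (c - 1 - i) :=
        Finset.sum_le_sum fun i _ =>
          mul_le_of_le_one_left (Nat.zero_le _) (Nat.le_of_lt_succ (Nat.mod_lt _ two_pos))
    _ = ∑ i ∈ Finset.range c, 2 ^ i := Finset.sum_range_reflect (2 ^ ·) c
    _ < 2 ^ c := Nat.geomSum_lt le_rfl fun _ => Finset.mem_range.mp

lemma bitRev_two_pow_mul_add (j k s : ℕ) {t : ℕ} (ht : t < 2 ^ j) :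
    bitRev (j + k) (2 ^ j * s + t) = 2 ^ k * bitRev j t + bitRev k s := by
  simp only [bitRev, ← Nat.toNat_testBit, Nat.testBit_two_pow_mul_add s ht,
    Finset.sum_range_add, Finset.mul_sum]
  congr 1 <;> refine Finset.sum_congr rfl fun i hi => ?_ <;> rw [Finset.mem_range] at hi
  · rw [if_pos hi, mul_left_comm, ← pow_add]
    congr 3
    omega
  · rw [if_neg (by omega), Nat.add_sub_cancel_left]
    congr 2
    omega

lemma bitRev_bitRev_s5 {c n : ℕ} (hn : n < 2 ^ c) : bitRev c (bitRev c n) = n := by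
  induction c generalizing n with
  | zero => simp_all [bitRev]
  | succ c ih =>
    have hbit : n % 2 < 2 ^ 1 := Nat.mod_lt _ two_pos
    have hbitRev_bit : bitRev 1 (n % 2) = n % 2 := by simp [bitRev]
    have hhalf : n / 2 < 2 ^ c := by rw [pow_succ] at hn; omega
    have hrev : bitRev (c + 1) n = 2 ^ c * (n % 2) + bitRev c (n / 2) := by
      have := bitRev_two_pow_mul_add 1 c (n / 2) hbit
      rw [pow_one, Nat.div_add_mod, add_comm 1 c, hbitRev_bit] at this
      rw [this, mul_comm]
    rw [hrev, bitRev_two_pow_mul_add c 1 _ (bitRev_lt_s5 c _), ih hhalf, hbitRev_bit]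
    omega

lemma exists_mem_Ico_mod_eq (g : ℕ) {d r : ℕ} (hr : r < d) :
    ∃ m ∈ Set.Ico g (g + d), m % d = r := by
  obtain ⟨q, hq⟩ : ∃ q, g ≤ d * q + r ∧ d * q + r < g + d := by
    have := Nat.div_add_mod g d
    have := Nat.mod_lt g (hr.trans_le' (Nat.zero_le r))
    rcases le_or_gt (g % d) r with h | h
    · exact ⟨g / d, by omega, by omega⟩
    · exact ⟨g / d + 1, by rw [mul_add_one]; omega, by rw [mul_add_one]; omega⟩
  exact ⟨d * q + r, hq, by rw [Nat.mul_add_mod, Nat.mod_eq_of_lt hr]⟩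

lemma exists_mul_add_le_of_two_mul_le (α β : ℕ) {d : ℕ} (hd : 0 < d) (h : 2 * d ≤ β - α + 1) :
    ∃ s, α ≤ d * s ∧ d * s + d ≤ β := by
  have := Nat.div_add_mod (α + d - 1) d
  have := Nat.mod_lt (α + d - 1) hd
  exact ⟨(α + d - 1) / d, by omega, by omega⟩

def periodicVdC (c : ℕ) : Set (ℕ × ℕ) := {p | bitRev c (p.1 % 2 ^ c) = p.2 % 2 ^ c}

section

variable {α β γ η : ℕ}

lemma periodicVdC_inter_nonempty_of_wide {c : ℕ} (hw : 2 ^ c ≤ β - α) (hγη : γ < η) :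
    (Set.Ico α β ×ˢ Set.Ico γ η ∩ periodicVdC c).Nonempty := by
  obtain ⟨n, ⟨hαn, hnα⟩, hn⟩ := exists_mem_Ico_mod_eq α (bitRev_lt_s5 c (γ % 2 ^ c))
  refine ⟨(n, γ), ⟨⟨hαn, by omega⟩, le_rfl, hγη⟩, ?_⟩
  exact (congrArg (bitRev c) hn).trans (bitRev_bitRev_s5 (Nat.mod_lt _ (Nat.two_pow_pos c)))

lemma periodicVdC_inter_nonempty_of_tall {c : ℕ} (hαβ : α < β) (hw : 2 ^ c ≤ η - γ) :
    (Set.Ico α β ×ˢ Set.Ico γ η ∩ periodicVdC c).Nonempty := by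
  obtain ⟨m, ⟨hγm, hmγ⟩, hm⟩ := exists_mem_Ico_mod_eq γ (bitRev_lt_s5 c (α % 2 ^ c))
  exact ⟨(α, m), ⟨⟨le_rfl, hαβ⟩, hγm, by omega⟩, hm.symm⟩

/-- The columns `2^j s ≤ n < 2^j (s + 1)` of a dyadic block meet `periodicVdC (j + k)` exactly in
the rows `m ≡ bitRev k (s % 2^k) [MOD 2^k]`, so any `2^k` consecutive rows contain a point. -/
lemma periodicVdC_inter_nonempty_of_dyadic_block {j k s : ℕ} (hαs : α ≤ 2 ^ j * s)
    (hsβ : 2 ^ j * s + 2 ^ j ≤ β) (hk : 2 ^ k ≤ η - γ) :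
    (Set.Ico α β ×ˢ Set.Ico γ η ∩ periodicVdC (j + k)).Nonempty := by
  obtain ⟨m, ⟨hγm, hmγ⟩, hm⟩ := exists_mem_Ico_mod_eq γ (bitRev_lt_s5 k (s % 2 ^ k))
  set u := m / 2 ^ k % 2 ^ j
  have hu : u < 2 ^ j := Nat.mod_lt _ (Nat.two_pow_pos j)
  have ht : bitRev j u < 2 ^ j := bitRev_lt_s5 j u
  have hn : (2 ^ j * s + bitRev j u) % 2 ^ (j + k) = 2 ^ j * (s % 2 ^ k) + bitRev j u := by
    rw [pow_add, Nat.mod_mul, Nat.mul_add_mod_self_left, Nat.mod_eq_of_lt ht,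
      Nat.mul_add_div (Nat.two_pow_pos j), Nat.div_eq_of_lt ht, add_zero, add_comm]
  have hm' : m % 2 ^ (j + k) = 2 ^ k * u + m % 2 ^ k := by
    rw [add_comm j, pow_add, Nat.mod_mul, add_comm]
  refine ⟨(2 ^ j * s + bitRev j u, m), ⟨⟨by omega, by omega⟩, hγm, by omega⟩, ?_⟩
  change bitRev (j + k) _ = _
  rw [hn, bitRev_two_pow_mul_add j k _ ht, bitRev_bitRev_s5 hu, hm', hm]

lemma periodicVdC_inter_nonempty_of_area_le {c : ℕ} (harea : 4 * 2 ^ c ≤ (β - α) * (η - γ)) :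
    (Set.Ico α β ×ˢ Set.Ico γ η ∩ periodicVdC c).Nonempty := by
  have hpos : 0 < (β - α) * (η - γ) := harea.trans_lt' (by positivity)
  have hαβ : α < β := Nat.sub_pos_iff_lt.mp (Nat.pos_of_mul_pos_right hpos)
  have hγη : γ < η := Nat.sub_pos_iff_lt.mp (Nat.pos_of_mul_pos_left hpos)
  by_cases hwide : 2 ^ c ≤ β - α
  · exact periodicVdC_inter_nonempty_of_wide hwide hγη
  by_cases htall : 2 ^ c ≤ η - γ
  · exact periodicVdC_inter_nonempty_of_tall hαβ htall
  set j := Nat.log 2 ((β - α + 1) / 2)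
  have hj_le : 2 ^ j ≤ (β - α + 1) / 2 := Nat.pow_log_le_self 2 (by omega)
  have hj_lt : (β - α + 1) / 2 < 2 ^ (j + 1) := Nat.lt_pow_succ_log_self one_lt_two _
  have hjc : j ≤ c := by
    by_contra! hcj
    have := Nat.pow_le_pow_right two_pos hcj
    rw [pow_succ] at this
    omega
  obtain ⟨k, rfl⟩ := Nat.exists_eq_add_of_le hjc
  obtain ⟨s, hαs, hsβ⟩ := exists_mul_add_le_of_two_mul_le α β (Nat.two_pow_pos j) (by omega)
  refine periodicVdC_inter_nonempty_of_dyadic_block hαs hsβ ?_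
  by_contra! hk
  have hwidth : β - α < 4 * 2 ^ j := by rw [pow_succ] at hj_lt; omega
  have := Nat.mul_lt_mul'' hwidth hk
  rw [pow_add] at harea
  linarith

end

theorem tiled_vdc_empty_rectangle_area_general (c z α β γ η : ℕ)
    (hdvd : 2 ^ c ∣ z) (hβ : β ≤ z) (hη : η ≤ z)
    (hempty : ∀ x y q : ℕ, x < z / 2 ^ c → y < z / 2 ^ c → q < 2 ^ c →
      ¬(α ≤ q + x * 2 ^ c ∧ q + x * 2 ^ c < β ∧
        γ ≤ bitRev c q + y * 2 ^ c ∧ bitRev c q + y * 2 ^ c < η)) :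
    (β - α) * (η - γ) < 4 * 2 ^ c := by
  by_contra! harea
  obtain ⟨⟨n, m⟩, ⟨⟨hαn, hnβ⟩, hγm, hmη⟩, hnm : bitRev c (n % 2 ^ c) = m % 2 ^ c⟩ :=
    periodicVdC_inter_nonempty_of_area_le harea
  refine hempty (n / 2 ^ c) (m / 2 ^ c) (n % 2 ^ c) (Nat.div_lt_div_of_lt_of_dvd hdvd (by omega))
    (Nat.div_lt_div_of_lt_of_dvd hdvd (by omega)) (Nat.mod_lt _ (Nat.two_pow_pos c)) ?_
  rw [Nat.mod_add_div', hnm, Nat.mod_add_div']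
  exact ⟨hαn, hnβ, hγm, hmη⟩

/-- Tiling the Van der Corput set `C_w` (with `w = 2^c`) over a `z × z` square,
where `w ∣ z`: any axis-parallel integer rectangle inside `[0,z]×[0,z]` containing
no point of the tiled set `T` has area strictly less than `4w`. -/
theorem tiled_vdc_empty_rectangle_area (c z α β γ η : ℕ) (hc : 0 < c) (hz : 0 < z)
    (hdvd : 2 ^ c ∣ z) (hβ : β ≤ z) (hη : η ≤ z)
    (hempty : ∀ x y q : ℕ, x < z / 2 ^ c → y < z / 2 ^ c → q < 2 ^ c →
      ¬(α ≤ q + x * 2 ^ c ∧ q + x * 2 ^ c < β ∧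
        γ ≤ bitRev c q + y * 2 ^ c ∧ bitRev c q + y * 2 ^ c < η)) :
    (β - α) * (η - γ) < 4 * 2 ^ c :=
  tiled_vdc_empty_rectangle_area_general c z α β γ η hdvd hβ hη hempty
end

section
/- For the coloring function c(i,j) = (j - f_{m'}(i mod m')) mod m' on the grid {0,...,n/d - 1}^2 with m' dividing n/d, the color class L_k = {(i,j) : c(i,j) = k} equals the shifted tiled Van der Corput set T_k = {(q + x·m', (f_{m'}(q) + y·m' + k) mod (n/d)) : x,y ∈ {0,...,n/(d·m')-1}, q ∈ {0,...,m'-1}}, for every k ∈ {0,...,m'-1}. -/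
theorem Nat.add_mul_lt_mul {q x m M : ℕ} (hq : q < m) (hx : x < M) : q + x * m < M * m :=
  calc q + x * m < m + x * m := by omega
    _ = (x + 1) * m := by ring
    _ ≤ M * m := Nat.mul_le_mul_right m hx

theorem Nat.exists_lt_add_mul_mod_eq {M m a j : ℕ} (hj : j < M * m) (h : j ≡ a [MOD m]) :
    ∃ y < M, (a + y * m) % (M * m) = j := by
  have hM : (0 : ℤ) < M := by exact_mod_cast Nat.pos_of_mul_pos_right (Nat.zero_lt_of_lt hj)
  obtain ⟨w, hw⟩ := Nat.modEq_iff_dvd.mp h.symm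
  -- `y` is `(j - a) / m` reduced modulo `M`, which moves `a + y m` by a multiple of `M m`.
  refine ⟨(w % M).toNat, by have := Int.emod_lt_of_pos w hM; omega, ?_⟩
  have hshift : (a : ℤ) + (w % M) * m = j + (M * m) * -(w / M) := by
    rw [Int.emod_def]; linear_combination -hw
  zify
  rw [Int.toNat_of_nonneg (Int.emod_nonneg w hM.ne'), hshift, Int.add_mul_emod_self_left,
    Int.emod_eq_of_lt (by positivity) (by exact_mod_cast hj)]

theorem Nat.lt_mul_and_modEq_iff {M m a j : ℕ} (hm : 0 < m) :
    j < M * m ∧ j ≡ a [MOD m] ↔ ∃ y < M, (a + y * m) % (M * m) = j := by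
  refine ⟨fun ⟨hj, h⟩ ↦ Nat.exists_lt_add_mul_mod_eq hj h, ?_⟩
  rintro ⟨y, hy, rfl⟩
  refine ⟨Nat.mod_lt _ (Nat.mul_pos (by omega) hm), ?_⟩
  calc (a + y * m) % (M * m) ≡ a + y * m [MOD m] := Nat.mod_mod_of_dvd _ (dvd_mul_left m M)
    _ ≡ a [MOD m] := Nat.add_mul_mod_self_right a y m

theorem Int.sub_emod_eq_iff_modEq {m j b k : ℕ} (hk : k < m) :
    ((j : ℤ) - b) % (m : ℕ) = k ↔ j ≡ b + k [MOD m] := by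
  have hkm : (k : ℤ) % m = k := Int.emod_eq_of_lt (by positivity) (by exact_mod_cast hk)
  conv_lhs => rw [← hkm]
  change (j - b : ℤ) ≡ k [ZMOD m] ↔ _
  rw [Int.modEq_iff_dvd, Nat.modEq_iff_dvd]
  push_cast
  ring_nf

theorem colorClass_eq_tiled (f : ℕ → ℕ) (M m k : ℕ) (hk : k < m) :
    {p : ℕ × ℕ | p.1 < M * m ∧ p.2 < M * m ∧ ((p.2 : ℤ) - f (p.1 % m)) % (m : ℕ) = k} =
    {p : ℕ × ℕ | ∃ x < M, ∃ y < M, ∃ q < m,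
        p = (q + x * m, (f q + y * m + k) % (M * m))} := by
  have hm : 0 < m := by omega
  ext ⟨i, j⟩
  simp only [Set.mem_ofPred_eq, Prod.mk.injEq, Int.sub_emod_eq_iff_modEq hk,
    add_right_comm _ _ k]
  constructor
  · rintro ⟨hi, hj, hij⟩
    obtain ⟨y, hy, rfl⟩ := (Nat.lt_mul_and_modEq_iff hm).mp ⟨hj, hij⟩
    exact ⟨i / m, Nat.div_lt_of_lt_mul (by rwa [mul_comm]), y, hy, i % m, Nat.mod_lt i hm,
      (Nat.mod_add_div' i m).symm, rfl⟩
  · rintro ⟨x, hx, y, hy, q, hq, rfl, rfl⟩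
    rw [Nat.add_mul_mod_self_right, Nat.mod_eq_of_lt hq]
    exact ⟨Nat.add_mul_lt_mul hq hx, (Nat.lt_mul_and_modEq_iff hm).mpr ⟨y, hy, rfl⟩⟩

theorem color_class_eq_shifted_tiled_vdc_general (c n d k : ℕ) (hdvd : 2 ^ c ∣ n / d) (hk : k < 2 ^ c) :
    {p : ℕ × ℕ | p.1 < n / d ∧ p.2 < n / d ∧
        ((p.2 : ℤ) - bitRev c (p.1 % 2 ^ c)) % (2 ^ c : ℕ) = k} =
    {p : ℕ × ℕ | ∃ x < n / (d * 2 ^ c), ∃ y < n / (d * 2 ^ c), ∃ q < 2 ^ c,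
        p = (q + x * 2 ^ c, (bitRev c q + y * 2 ^ c + k) % (n / d))} := by
  have hN : n / d = n / (d * 2 ^ c) * 2 ^ c := by
    rw [← Nat.div_div_eq_div_mul, Nat.div_mul_cancel hdvd]
  rw [hN]
  exact colorClass_eq_tiled (bitRev c) _ _ k hk

/-- For the coloring `col(i,j) = (j - f_{m'}(i mod m')) mod m'` on the grid
`{0,...,n/d-1}²` with `m' = 2^c` dividing `n/d`, the color class `L_k` equals the
shifted tiled Van der Corput set `T_k`. -/
theorem color_class_eq_shifted_tiled_vdc (c n d k : ℕ) (hc : 0 < c) (hn : 0 < n)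
    (hd : 0 < d) (hdvd : 2 ^ c ∣ n / d) (hk : k < 2 ^ c) :
    {p : ℕ × ℕ | p.1 < n / d ∧ p.2 < n / d ∧
        ((p.2 : ℤ) - bitRev c (p.1 % 2 ^ c)) % (2 ^ c : ℕ) = k} =
    {p : ℕ × ℕ | ∃ x < n / (d * 2 ^ c), ∃ y < n / (d * 2 ^ c), ∃ q < 2 ^ c,
        p = (q + x * 2 ^ c, (bitRev c q + y * 2 ^ c + k) % (n / d))} :=
  color_class_eq_shifted_tiled_vdc_general c n d k hdvd hk
end

section
/- Let w = 2^c and m3 = 3^{⌈c·log_3 2⌉}. The w·m3 shifted scaled Halton–Hammersley sets H_w^{d1,d2}, for d1 ∈ {0,...,w-1} and d2 ∈ {0,...,m3-1}, together cover all w^2·m3 integer points of {0,...,w-1} × {0,...,w-1} × {0,...,m3-1}, and the sets are pairwise disjoint. -/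
/-! For each point `k`, the shift `(d1, d2)` acts on the last two coordinates as a translation
in `ℤ/w × ℤ/m3`, which is a bijection; so every point of the box lies over exactly one shift. -/

/-- Scaled base-`p` digit reversal with `e` digits. -/
def baseRev (p e z : ℕ) : ℕ := ∑ i ∈ Finset.range e, (z / p ^ i % p) * p ^ (e - 1 - i)

/-- The shifted scaled Halton–Hammersley set `H_w^{d1,d2}` for `w = 2^c`,
`m3 = 3^⌈c·log₃2⌉`. -/
def HHset (c d1 d2 : ℕ) : Set (ℕ × ℕ × ℕ) :=
  {p | ∃ k < 2 ^ c,
    p = (k, (baseRev 2 c k + d1) % 2 ^ c,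
          (baseRev 3 (Nat.clog 3 (2 ^ c)) k + d2) % 3 ^ Nat.clog 3 (2 ^ c))}

namespace Nat

theorem exists_lt_add_mod_eq (a : ℕ) {n y : ℕ} (hy : y < n) : ∃ d < n, (a + d) % n = y := by
  have hn : 0 < n := by omega
  refine ⟨(y + n - a % n) % n, Nat.mod_lt _ hn, ?_⟩
  have hsum : a + (y + n - a % n) = y + n * (a / n + 1) := by
    have := Nat.div_add_mod a n
    have := Nat.mod_lt a hn
    rw [mul_add, mul_one]
    omega
  rw [Nat.add_mod_mod, hsum, Nat.add_mul_mod_self_left, Nat.mod_eq_of_lt hy]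

theorem eq_of_add_mod_eq_add_mod {a d d' n : ℕ} (h : (a + d) % n = (a + d') % n)
    (hd : d < n) (hd' : d' < n) : d = d' :=
  (Nat.ModEq.add_left_cancel' a h).eq_of_lt_of_lt hd hd'

end Nat

theorem mem_HHset {c d1 d2 k y z : ℕ} :
    (k, y, z) ∈ HHset c d1 d2 ↔ k < 2 ^ c ∧ y = (baseRev 2 c k + d1) % 2 ^ c ∧
      z = (baseRev 3 (Nat.clog 3 (2 ^ c)) k + d2) % 3 ^ Nat.clog 3 (2 ^ c) := by
  simp [HHset]

theorem shifted_scaled_HH_cover_and_disjoint_general (c : ℕ) :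
    (∀ x y z : ℕ, x < 2 ^ c → y < 2 ^ c → z < 3 ^ Nat.clog 3 (2 ^ c) →
      ∃ d1 < 2 ^ c, ∃ d2 < 3 ^ Nat.clog 3 (2 ^ c), (x, y, z) ∈ HHset c d1 d2) ∧
    (∀ d1 d2 d1' d2' : ℕ, d1 < 2 ^ c → d1' < 2 ^ c →
      d2 < 3 ^ Nat.clog 3 (2 ^ c) → d2' < 3 ^ Nat.clog 3 (2 ^ c) →
      (d1, d2) ≠ (d1', d2') → Disjoint (HHset c d1 d2) (HHset c d1' d2')) := by
  constructor
  · intro x y z hx hy hz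
    obtain ⟨d1, hd1, hy'⟩ := Nat.exists_lt_add_mod_eq (baseRev 2 c x) hy
    obtain ⟨d2, hd2, hz'⟩ := Nat.exists_lt_add_mod_eq (baseRev 3 (Nat.clog 3 (2 ^ c)) x) hz
    exact ⟨d1, hd1, d2, hd2, mem_HHset.2 ⟨hx, hy'.symm, hz'.symm⟩⟩
  · intro d1 d2 d1' d2' hd1 hd1' hd2 hd2' hne
    refine Set.disjoint_left.2 fun ⟨k, y, z⟩ hp hp' => hne ?_
    obtain ⟨-, rfl, rfl⟩ := mem_HHset.1 hp
    obtain ⟨-, hy, hz⟩ := mem_HHset.1 hp'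
    rw [Nat.eq_of_add_mod_eq_add_mod hy hd1 hd1', Nat.eq_of_add_mod_eq_add_mod hz hd2 hd2']

/-- The `w·m3` shifted scaled Halton–Hammersley sets cover all integer points of
`{0,...,w-1} × {0,...,w-1} × {0,...,m3-1}`, and they are pairwise disjoint. -/
theorem shifted_scaled_HH_cover_and_disjoint (c : ℕ) (hc : 0 < c) :
    (∀ x y z : ℕ, x < 2 ^ c → y < 2 ^ c → z < 3 ^ Nat.clog 3 (2 ^ c) →
      ∃ d1 < 2 ^ c, ∃ d2 < 3 ^ Nat.clog 3 (2 ^ c), (x, y, z) ∈ HHset c d1 d2) ∧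
    (∀ d1 d2 d1' d2' : ℕ, d1 < 2 ^ c → d1' < 2 ^ c →
      d2 < 3 ^ Nat.clog 3 (2 ^ c) → d2' < 3 ^ Nat.clog 3 (2 ^ c) →
      (d1, d2) ≠ (d1', d2') → Disjoint (HHset c d1 d2) (HHset c d1' d2')) :=
  shifted_scaled_HH_cover_and_disjoint_general c
end

section
/- For all integers d ≥ 1, p ≥ 1, and 1 ≤ i ≤ p, the inequality ((2^i + 1)d + d - 1)·((2^{p+1-i} + 1)d + d - 1) ≤ (4d - 1)·((2^p + 1)d + d - 1) holds. -/
/-!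
Put `a = 2^i`, `b = 2^(p+1-i)` and `n = 2^p`, so `a, b ≥ 2` and `a * b = 2 * n`. Then
`(a - 2)(b - 2) ≥ 0` gives `a + b ≤ n + 2`, and for `d ≥ 1` the right-hand side exceeds the
left-hand side by exactly `(n + 2 - a - b) * d * (2d - 1)`.
-/

theorem add_le_of_two_le_of_mul_eq {a b n : ℕ} (ha : 2 ≤ a) (hb : 2 ≤ b) (hab : a * b = 2 * n) :
    a + b ≤ n + 2 := by
  obtain ⟨a, rfl⟩ := Nat.exists_eq_add_of_le ha
  obtain ⟨b, rfl⟩ := Nat.exists_eq_add_of_le hb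
  nlinarith

theorem product_le_of_two_le_of_mul_eq {a b n d : ℕ} (ha : 2 ≤ a) (hb : 2 ≤ b)
    (hab : a * b = 2 * n) :
    ((a + 1) * d + d - 1) * ((b + 1) * d + d - 1) ≤ (4 * d - 1) * ((n + 1) * d + d - 1) := by
  obtain ⟨k, hk⟩ := Nat.exists_eq_add_of_le (add_le_of_two_le_of_mul_eq ha hb hab)
  rcases d with _ | d
  · simp
  have shift : ∀ c, (c + 1) * (d + 1) + (d + 1) - 1 = (c + 2) * d + c + 1 := fun c => by
    rw [Nat.sub_eq_of_eq_add]; ring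
  have key : (4 * d + 3) * ((n + 2) * d + n + 1) =
      ((a + 2) * d + a + 1) * ((b + 2) * d + b + 1) + k * (d + 1) * (2 * d + 1) := by
    linear_combination (d + 1) * (2 * d + 1) * hk + (d + 1) ^ 2 * hab.symm
  rw [shift, shift, shift, show 4 * (d + 1) - 1 = 4 * d + 3 by omega, key]
  exact Nat.le_add_right _ _

theorem product_inequality_general (d p i : ℕ) (hi : 1 ≤ i)
    (hip : i ≤ p) :
    ((2 ^ i + 1) * d + d - 1) * ((2 ^ (p + 1 - i) + 1) * d + d - 1) ≤
      (4 * d - 1) * ((2 ^ p + 1) * d + d - 1) := by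
  have hpow : 2 ^ i * 2 ^ (p + 1 - i) = 2 * 2 ^ p := by
    rw [← pow_add, Nat.add_sub_cancel' (by omega), pow_succ']
  exact product_le_of_two_le_of_mul_eq (Nat.le_self_pow (by omega) 2)
    (Nat.le_self_pow (by omega) 2) hpow

/-- For positive integers `d, p` and `1 ≤ i ≤ p`,
`((2^i+1)d + d - 1)((2^{p+1-i}+1)d + d - 1) ≤ (4d-1)((2^p+1)d + d - 1)`. -/
theorem product_inequality (d p i : ℕ) (hd : 1 ≤ d) (hp : 1 ≤ p) (hi : 1 ≤ i)
    (hip : i ≤ p) :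
    ((2 ^ i + 1) * d + d - 1) * ((2 ^ (p + 1 - i) + 1) * d + d - 1) ≤
      (4 * d - 1) * ((2 ^ p + 1) * d + d - 1) :=
  product_inequality_general d p i hi hip
end

section
/- Any rectangle of dimensions a × b with a·b ≥ (4d-1)·((m+1)d + d - 1) and min(a,b) ≥ 3d - 1, where m = 2^p for a positive integer p, contains an axis-aligned sub-rectangle of dimensions ((x+1)d) × ((y+1)d) for some positive integers x, y with x·y = m. -/
/-!
Take the largest `k ≤ p` with `(2^k + 1) d ≤ a` (`k = 0` qualifies since `a ≥ 2d`) and split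
`2^p = 2^k · 2^(p-k)`. If `k = p`, the sub-rectangle `(2^p + 1) d × 2d` fits. Otherwise
`a < (2^(k+1) + 1) d`, and the area bound forces `b ≥ (2^(p-k) + 1) d`.
-/

theorem Nat.exists_le_and_not_succ_of_zero {P : ℕ → Prop} (h0 : P 0) (p : ℕ) :
    ∃ k ≤ p, P k ∧ (k < p → ¬ P (k + 1)) := by
  induction p with
  | zero => exact ⟨0, le_rfl, h0, by omega⟩
  | succ p ih =>
    obtain ⟨k, hkp, hk, hmax⟩ := ih
    rcases hkp.lt_or_eq with hlt | rfl
    · exact ⟨k, by omega, hk, fun _ => hmax hlt⟩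
    · by_cases hsucc : P (k + 1)
      · exact ⟨k + 1, le_rfl, hsucc, by omega⟩
      · exact ⟨k, by omega, hk, fun _ => hsucc⟩

theorem mul_lt_of_lt_two_mul_add_one_mul {d s t a b : ℕ} (hs : 1 ≤ s) (ht : 2 ≤ t)
    (ha : a < (2 * s + 1) * d) (hb : b < (t + 1) * d) :
    a * b < (4 * d - 1) * ((s * t + 1) * d + d - 1) := by
  have hd : 1 ≤ d := Nat.pos_of_ne_zero (by rintro rfl; simp at ha)
  have h4 : 1 ≤ 4 * d := by omega
  have hm : 1 ≤ (s * t + 1) * d + d := by nlinarith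
  zify [h4, hm] at ha hb ⊢
  have hs' : (1 : ℤ) ≤ s := by exact_mod_cast hs
  have ht' : (2 : ℤ) ≤ t := by exact_mod_cast ht
  have hd' : (1 : ℤ) ≤ d := by exact_mod_cast hd
  have hab : (a : ℤ) * b ≤ ((2 * s + 1) * d - 1) * ((t + 1) * d - 1) :=
    mul_le_mul (by omega) (by omega) (by positivity) (by nlinarith)
  nlinarith [mul_nonneg (mul_nonneg (sub_nonneg.2 hs') (sub_nonneg.2 ht')) (sub_nonneg.2 hd'),
    mul_nonneg (sub_nonneg.2 ht') (sub_nonneg.2 hd'), mul_nonneg (sub_nonneg.2 hs') (sub_nonneg.2 hd'),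
    mul_nonneg (sub_nonneg.2 hd') (sub_nonneg.2 hd')]

theorem legal_fragment_contains_unit_grid_general (d p a b : ℕ)
    (hab : (4 * d - 1) * ((2 ^ p + 1) * d + d - 1) ≤ a * b)
    (ha : 3 * d - 1 ≤ a) (hb : 3 * d - 1 ≤ b) :
    ∃ x y : ℕ, 0 < x ∧ 0 < y ∧ x * y = 2 ^ p ∧
      (((x + 1) * d ≤ a ∧ (y + 1) * d ≤ b) ∨ ((x + 1) * d ≤ b ∧ (y + 1) * d ≤ a)) := by
  obtain ⟨k, hkp, hk, hmax⟩ :=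
    Nat.exists_le_and_not_succ_of_zero (P := fun k => (2 ^ k + 1) * d ≤ a) (by omega) p
  rcases hkp.lt_or_eq with hlt | rfl
  · have hsplit : 2 ^ k * 2 ^ (p - k) = 2 ^ p := by rw [← pow_add, Nat.add_sub_cancel' hkp]
    refine ⟨2 ^ k, 2 ^ (p - k), by positivity, by positivity, hsplit, Or.inl ⟨hk, ?_⟩⟩
    by_contra! hb'
    have ha' : a < (2 * 2 ^ k + 1) * d := by simpa [pow_succ, mul_comm] using hmax hlt
    have ht : 2 ≤ 2 ^ (p - k) := Nat.le_self_pow (by omega) 2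
    have harea := mul_lt_of_lt_two_mul_add_one_mul Nat.one_le_two_pow ht ha' hb'
    rw [hsplit] at harea
    omega
  · exact ⟨2 ^ k, 1, by positivity, one_pos, mul_one _, Or.inl ⟨hk, by omega⟩⟩

/-- Any `a × b` rectangle with `a·b ≥ (4d-1)((m+1)d + d - 1)` and `min(a,b) ≥ 3d-1`,
where `m = 2^p`, contains a `((x+1)d) × ((y+1)d)` sub-rectangle for some positive
integers `x, y` with `x·y = m`. -/
theorem legal_fragment_contains_unit_grid (d p a b : ℕ) (hd : 0 < d) (hp : 0 < p)
    (hab : (4 * d - 1) * ((2 ^ p + 1) * d + d - 1) ≤ a * b)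
    (ha : 3 * d - 1 ≤ a) (hb : 3 * d - 1 ≤ b) :
    ∃ x y : ℕ, 0 < x ∧ 0 < y ∧ x * y = 2 ^ p ∧
      (((x + 1) * d ≤ a ∧ (y + 1) * d ≤ b) ∨ ((x + 1) * d ≤ b ∧ (y + 1) * d ≤ a)) :=
  legal_fragment_contains_unit_grid_general d p a b hab ha hb
end
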